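/- For every integer d ≥ 1, setting c(d) = ∑_{j=0}^{d} C(d,j)·b(j)·b(d−j), there exists a polynomial q with real coefficients such that for every integer n ≥ 0, ∑_{k=0}^{n−1} (k^d − c(d))·2^k/k! = q(n)·2^n/n! − q(0). -/

import Mathlib

/-
With the weights `w k = 2 ^ k / k!` one has `(k + 1) * w (k + 1) = 2 * w k`, so for every polynomial `r`
the sum `∑_{k<n} (2 r(k) - k r(k-1)) w k` telescopes to `q(n) w n - q(0)` with `q = X * r(X - 1)`.
It therefore suffices that `X ^ d - c(d)` lies in the range of `L r = 2 r - X * r(X - 1)`.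
Since `L = 2 - M` with `M r = X * r(X - 1)`, this range is stable under `M`; it contains `L (-1) = X - 2`;
and `X ^ (d + 1) = ∑_j C(d,j) M (X ^ j)`. By induction on `d`, `X ^ d - c(d)` lies in the range as soon as
`c(0) = 1` and `c(d + 1) = 2 ∑_j C(d,j) c(j)`. This recursion holds because the exponential generating
function of `c` is `B²`, where `B` is that of the Bell numbers: `B' = eˣ B`, hence `(B²)' = 2 eˣ B²`.
-/

/-- The Bell numbers: `bell 0 = 1` and `bell (d+1) = ∑_{j=0}^{d} C(d,j) * bell j`. -/
def bell : ℕ → ℕ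
  | 0 => 1
  | d + 1 => ∑ j ∈ (Finset.range (d + 1)).attach, Nat.choose d j.1 * bell j.1
  decreasing_by exact Finset.mem_range.mp j.2

open Finset Polynomial

section ExponentialGeneratingFunction

variable {K : Type*} [Field K]

noncomputable def egf (a : ℕ → K) : PowerSeries K :=
  PowerSeries.mk fun n => a n / n.factorial

def binomialConvolution (a b : ℕ → K) (n : ℕ) : K :=
  ∑ j ∈ range (n + 1), (n.choose j : K) * a j * b (n - j)

@[simp]
theorem coeff_egf (a : ℕ → K) (n : ℕ) : PowerSeries.coeff n (egf a) = a n / n.factorial :=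
  PowerSeries.coeff_mk _ _

theorem egf_mul [CharZero K] (a b : ℕ → K) : egf a * egf b = egf (binomialConvolution a b) := by
  ext n
  rw [PowerSeries.coeff_mul, Nat.sum_antidiagonal_eq_sum_range_succ_mk, coeff_egf,
    binomialConvolution, sum_div]
  refine sum_congr rfl fun j hj => ?_
  have hjn : j ≤ n := Nat.lt_succ_iff.mp (mem_range.mp hj)
  have : (n.factorial : K) ≠ 0 := Nat.cast_ne_zero.2 n.factorial_ne_zero
  rw [coeff_egf, coeff_egf, Nat.cast_choose K hjn]
  field_simp

theorem derivative_egf [CharZero K] (a : ℕ → K) :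
    PowerSeries.derivative K (egf a) = egf fun n => a (n + 1) := by
  ext n
  rw [PowerSeries.coeff_derivative, coeff_egf, coeff_egf, Nat.factorial_succ]
  push_cast
  field_simp

end ExponentialGeneratingFunction

theorem bell_succ (d : ℕ) : bell (d + 1) = ∑ j ∈ range (d + 1), d.choose j * bell j :=
  (bell.eq_2 d).trans (sum_attach (range (d + 1)) fun j => d.choose j * bell j)

section Bell

variable (K : Type*) [Field K] [CharZero K]

noncomputable abbrev bellEGF : PowerSeries K := egf fun n => (bell n : K)

theorem derivative_bellEGF : PowerSeries.derivative K (bellEGF K) = bellEGF K * egf 1 := by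
  rw [derivative_egf, egf_mul]
  congr 1
  funext n
  simp [binomialConvolution, bell_succ]

theorem binomialConvolution_bell_succ (d : ℕ) :
    binomialConvolution (fun n => (bell n : K)) (fun n => bell n) (d + 1) =
      2 * ∑ j ∈ range (d + 1), (d.choose j : K) *
        binomialConvolution (fun n => (bell n : K)) (fun n => bell n) j := by
  have h := congrArg (PowerSeries.coeff d)
    (PowerSeries.derivative K |>.leibniz (bellEGF K) (bellEGF K))
  rw [derivative_bellEGF, egf_mul, derivative_egf, smul_eq_mul, ← mul_assoc, egf_mul, egf_mul,
    map_add, coeff_egf, coeff_egf, ← add_div,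
    div_left_inj' (Nat.cast_ne_zero.2 d.factorial_ne_zero)] at h
  rw [h, binomialConvolution]
  simp [two_mul]

end Bell

section PoissonDefect

variable {R : Type*} [CommRing R]

noncomputable def shiftMulX : R[X] →ₗ[R] R[X] :=
  LinearMap.mulLeft R X ∘ₗ (aeval (X - 1 : R[X])).toLinearMap

theorem shiftMulX_apply (r : R[X]) : shiftMulX r = X * r.comp (X - 1) := by
  simp [shiftMulX, comp_eq_aeval]

noncomputable def poissonDefect (t : R) : R[X] →ₗ[R] R[X] :=
  t • LinearMap.id - shiftMulX

theorem poissonDefect_apply (t : R) (r : R[X]) : poissonDefect t r = C t * r - shiftMulX r := by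
  simp [poissonDefect, smul_eq_C_mul]

theorem shiftMulX_mem_range_poissonDefect {t : R} {p : R[X]}
    (hp : p ∈ LinearMap.range (poissonDefect t)) :
    shiftMulX p ∈ LinearMap.range (poissonDefect t) := by
  obtain ⟨r, rfl⟩ := hp
  exact ⟨shiftMulX r, by simp [poissonDefect]⟩

theorem X_sub_C_mem_range_poissonDefect (t : R) :
    X - C t ∈ LinearMap.range (poissonDefect t) :=
  ⟨-1, by simp [poissonDefect_apply, shiftMulX_apply]; ring⟩

theorem shiftMulX_C (c : R) : shiftMulX (C c) = c • X := by
  rw [shiftMulX_apply, C_comp, smul_eq_C_mul, mul_comm]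

theorem X_pow_succ_eq_sum_shiftMulX (d : ℕ) :
    (X : R[X]) ^ (d + 1) = ∑ j ∈ range (d + 1), (d.choose j : R) • shiftMulX (X ^ j) := by
  rw [pow_succ', ← sub_add_cancel (X : R[X]) 1, add_pow, mul_sum, sub_add_cancel]
  refine sum_congr rfl fun j _ => ?_
  rw [shiftMulX_apply, X_pow_comp, one_pow, mul_one, smul_eq_C_mul, ← C_eq_natCast]
  ring

theorem X_pow_sub_C_mem_range_poissonDefect {t : R} {c : ℕ → R} (h0 : c 0 = 1)
    (hsucc : ∀ d, c (d + 1) = t * ∑ j ∈ range (d + 1), d.choose j * c j) (d : ℕ) :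
    X ^ d - C (c d) ∈ LinearMap.range (poissonDefect t) := by
  induction d using Nat.strong_induction_on with
  | _ d ih =>
    rcases d with _ | d
    · simp [h0]
    have key : X ^ (d + 1) - C (c (d + 1)) =
        ∑ j ∈ range (d + 1), (d.choose j : R) • shiftMulX (X ^ j - C (c j)) +
          (∑ j ∈ range (d + 1), d.choose j * c j) • (X - C t) := by
      simp_rw [map_sub, shiftMulX_C, smul_sub, sum_sub_distrib, ← X_pow_succ_eq_sum_shiftMulX,
        smul_smul, ← sum_smul, hsucc, smul_eq_C_mul, C_mul]
      ring
    rw [key]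
    refine add_mem (sum_mem fun j hj => Submodule.smul_mem _ _ ?_)
      (Submodule.smul_mem _ _ (X_sub_C_mem_range_poissonDefect t))
    exact shiftMulX_mem_range_poissonDefect (ih j (mem_range.mp hj))

theorem sum_range_poissonDefect_eval {K : Type*} [Field K] [CharZero K] (t : K) (r : K[X])
    (n : ℕ) :
    ∑ k ∈ range n, (poissonDefect t r).eval (k : K) * t ^ k / k.factorial =
      (shiftMulX r).eval (n : K) * t ^ n / n.factorial - (shiftMulX r).eval 0 := by
  have h := sum_range_sub (fun k => (shiftMulX r).eval (k : K) * t ^ k / k.factorial) n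
  simp only [Nat.cast_zero, pow_zero, Nat.factorial_zero, Nat.cast_one, div_one, mul_one] at h
  rw [← h]
  refine sum_congr rfl fun k _ => ?_
  have : (k.factorial : K) ≠ 0 := Nat.cast_ne_zero.2 k.factorial_ne_zero
  simp only [poissonDefect_apply, shiftMulX_apply, eval_sub, eval_mul, eval_C, eval_X, eval_comp,
    eval_one, Nat.factorial_succ]
  push_cast
  rw [add_sub_cancel_right]
  field_simp
  ring

end PoissonDefect

theorem stmt_17_general (d : ℕ) :
    ∃ q : Polynomial ℝ, ∀ n : ℕ,
      ∑ k ∈ Finset.range n,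
          (((k : ℝ) ^ d -
              ∑ j ∈ Finset.range (d + 1),
                (Nat.choose d j : ℝ) * (bell j : ℝ) * (bell (d - j) : ℝ)) *
            2 ^ k / (Nat.factorial k : ℝ)) =
        q.eval (n : ℝ) * 2 ^ n / (Nat.factorial n : ℝ) - q.eval 0 := by
  obtain ⟨r, hr⟩ := X_pow_sub_C_mem_range_poissonDefect (t := (2 : ℝ))
    (c := binomialConvolution (fun n => (bell n : ℝ)) fun n => bell n)
    (by simp [binomialConvolution, bell]) (binomialConvolution_bell_succ ℝ) d
  refine ⟨shiftMulX r, fun n => ?_⟩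
  rw [← sum_range_poissonDefect_eval, hr]
  simp only [eval_sub, eval_pow, eval_X, eval_C]
  rfl

theorem stmt_17 (d : ℕ) (hd : 1 ≤ d) :
    ∃ q : Polynomial ℝ, ∀ n : ℕ,
      ∑ k ∈ Finset.range n,
          (((k : ℝ) ^ d -
              ∑ j ∈ Finset.range (d + 1),
                (Nat.choose d j : ℝ) * (bell j : ℝ) * (bell (d - j) : ℝ)) *
            2 ^ k / (Nat.factorial k : ℝ)) =
        q.eval (n : ℝ) * 2 ^ n / (Nat.factorial n : ℝ) - q.eval 0 :=
  stmt_17_general d
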